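/- Let $V$ be a linear subspace of $S=S_1\oplus S_2\oplus S_3$ with $\dim V=8$. Then for almost every $\xi\in\mathbb{R}^2$, $\dim(\pi_{1,2}P_\xi(V))\ge 5$ (hence equals $5$). -/
import Mathlib


open Matrix

/-- The linear map `π_{1,2} ∘ P_ξ` at `ξ = (a,b)`, acting on polynomials of degree ≤ 3
with zero constant term, written in the monomial basis `r, s, r², rs, s², r³, r²s, rs², s³`
of the domain and `r, s, r², rs, s²` of the codomain. -/
noncomputable def Lmat (a b : ℝ) : Matrix (Fin 5) (Fin 9) ℝ :=
  !![1,0,0,0,0,-3*a^2,-2*a*b,-b^2,0;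
     0,1,0,0,0,0,-a^2,-2*a*b,-3*b^2;
     0,0,1,0,0,3*a,b,0,0;
     0,0,0,1,0,0,2*a,2*b,0;
     0,0,0,0,1,0,0,a,3*b]

noncomputable def Lmap (a b : ℝ) : (Fin 9 → ℝ) →ₗ[ℝ] (Fin 5 → ℝ) :=
  (Lmat a b).mulVecLin

/-- `S₃` = span of `r³, r²s, rs², s³`. -/
noncomputable def S₃ : Submodule ℝ (Fin 9 → ℝ) :=
  Submodule.span ℝ {Pi.single (5 : Fin 9) 1, Pi.single 6 1, Pi.single 7 1, Pi.single 8 1}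

open MvPolynomial

lemma Lmap_surj (a b : ℝ) : Function.Surjective (Lmap a b) := by
  intro y
  refine ⟨![y 0, y 1, y 2, y 3, y 4, 0, 0, 0, 0], ?_⟩
  funext i
  fin_cases i <;>
    simp [Lmap, Lmat, Matrix.mulVecLin, Matrix.mulVec, dotProduct, Fin.sum_univ_succ]

lemma finrank_ker_Lmap (a b : ℝ) : Module.finrank ℝ (LinearMap.ker (Lmap a b)) = 4 := by
  have h := LinearMap.finrank_range_add_finrank_ker (Lmap a b)
  rw [LinearMap.range_eq_top.2 (Lmap_surj a b)] at h
  simp only [finrank_top] at h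
  simp only [Module.finrank_pi, Fintype.card_fin] at h
  omega

lemma aux_dim (V : Submodule ℝ (Fin 9 → ℝ)) (hV : Module.finrank ℝ V = 8) (a b : ℝ)
    (k : Fin 9 → ℝ) (hk : k ∈ LinearMap.ker (Lmap a b)) (hkV : k ∉ V) :
    Module.finrank ℝ (Submodule.map (Lmap a b) V) = 5 := by
  set K := LinearMap.ker (Lmap a b) with hK
  have hlt : V ⊓ K < K := by
    refine lt_of_le_of_ne inf_le_right fun h => hkV ?_
    rw [← h] at hk
    exact hk.1
  have h3 : Module.finrank ℝ ↥(V ⊓ K) < 4 := by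
    rw [← finrank_ker_Lmap a b]
    exact Submodule.finrank_lt_finrank_of_lt hlt
  have rn := LinearMap.finrank_range_add_finrank_ker ((Lmap a b).domRestrict V)
  rw [LinearMap.range_domRestrict, LinearMap.ker_domRestrict] at rn
  have hcomap : Module.finrank ℝ ↥(Submodule.comap V.subtype K) = Module.finrank ℝ ↥(V ⊓ K) := by
    rw [← Submodule.finrank_map_subtype_eq V, Submodule.map_comap_subtype]
  have hle : Module.finrank ℝ ↥(Submodule.map (Lmap a b) V) ≤ 5 := by
    have := Submodule.finrank_le (Submodule.map (Lmap a b) V)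
    simpa using this
  rw [hV, hcomap] at rn
  omega

lemma phi_sum (φ : (Fin 9 → ℝ) →ₗ[ℝ] ℝ) (x : Fin 9 → ℝ) :
    φ x = ∑ i, x i * φ (Pi.single i 1) := by
  rw [LinearMap.pi_apply_eq_sum_univ]
  refine Finset.sum_congr rfl fun i _ => ?_
  rw [smul_eq_mul]
  have h : (fun j => if i = j then (1:ℝ) else 0) = Pi.single i 1 :=
    funext fun j => by simp [Pi.single_apply, eq_comm]
  rw [h]

lemma k1_mem (a b : ℝ) : ![3*a^2, 0, -3*a, 0, 0, 1, 0, 0, 0] ∈ LinearMap.ker (Lmap a b) := by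
  rw [LinearMap.mem_ker]
  funext i
  fin_cases i <;>
    (simp [Lmap, Lmat, Matrix.mulVecLin, Matrix.mulVec, dotProduct, Fin.sum_univ_succ]; try ring)

lemma k2_mem (a b : ℝ) : ![2*a*b, a^2, -b, -2*a, 0, 0, 1, 0, 0] ∈ LinearMap.ker (Lmap a b) := by
  rw [LinearMap.mem_ker]
  funext i
  fin_cases i <;>
    (simp [Lmap, Lmat, Matrix.mulVecLin, Matrix.mulVec, dotProduct, Fin.sum_univ_succ]; try ring)

lemma k3_mem (a b : ℝ) : ![b^2, 2*a*b, 0, -2*b, -a, 0, 0, 1, 0] ∈ LinearMap.ker (Lmap a b) := by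
  rw [LinearMap.mem_ker]
  funext i
  fin_cases i <;>
    (simp [Lmap, Lmat, Matrix.mulVecLin, Matrix.mulVec, dotProduct, Fin.sum_univ_succ]; try ring)

lemma k4_mem (a b : ℝ) : ![0, 3*b^2, 0, 0, -3*b, 0, 0, 0, 1] ∈ LinearMap.ker (Lmap a b) := by
  rw [LinearMap.mem_ker]
  funext i
  fin_cases i <;>
    (simp [Lmap, Lmat, Matrix.mulVecLin, Matrix.mulVec, dotProduct, Fin.sum_univ_succ]; try ring)

@[simp] lemma vec9_5 (a0 a1 a2 a3 a4 a5 a6 a7 a8 : ℝ) :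
    ![a0,a1,a2,a3,a4,a5,a6,a7,a8] 5 = a5 := rfl
@[simp] lemma vec9_6 (a0 a1 a2 a3 a4 a5 a6 a7 a8 : ℝ) :
    ![a0,a1,a2,a3,a4,a5,a6,a7,a8] 6 = a6 := rfl
@[simp] lemma vec9_7 (a0 a1 a2 a3 a4 a5 a6 a7 a8 : ℝ) :
    ![a0,a1,a2,a3,a4,a5,a6,a7,a8] 7 = a7 := rfl
@[simp] lemma vec9_8 (a0 a1 a2 a3 a4 a5 a6 a7 a8 : ℝ) :
    ![a0,a1,a2,a3,a4,a5,a6,a7,a8] 8 = a8 := rfl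

lemma sum9 (f : Fin 9 → ℝ) : ∑ i, f i
    = f 0 + f 1 + f 2 + f 3 + f 4 + f 5 + f 6 + f 7 + f 8 := by
  rw [Fin.sum_univ_succ, Fin.sum_univ_eight]
  norm_num [show (Fin.succ 2 : Fin 9) = 3 from rfl, show (Fin.succ 3 : Fin 9) = 4 from rfl,
    show (Fin.succ 4 : Fin 9) = 5 from rfl, show (Fin.succ 5 : Fin 9) = 6 from rfl,
    show (Fin.succ 6 : Fin 9) = 7 from rfl, show (Fin.succ 7 : Fin 9) = 8 from rfl]
  ring

set_option maxHeartbeats 1000000 in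
theorem stmt4 (V : Submodule ℝ (Fin 9 → ℝ)) (hV : Module.finrank ℝ V = 8) :
    ∃ P : MvPolynomial (Fin 2) ℝ, P ≠ 0 ∧ ∀ a b : ℝ,
      MvPolynomial.eval ![a, b] P ≠ 0 →
      5 ≤ Module.finrank ℝ (Submodule.map (Lmap a b) V) ∧
      Module.finrank ℝ (Submodule.map (Lmap a b) V) = 5 := by
  have hVne : V ≠ ⊤ := by
    intro h
    rw [h, finrank_top] at hV
    simp [Module.finrank_pi] at hV
  obtain ⟨φ, hφ0, hφV⟩ :=
    Submodule.exists_dual_map_eq_bot_of_lt_top (lt_top_iff_ne_top.2 hVne) inferInstance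
  have hVker : V ≤ LinearMap.ker φ := LinearMap.le_ker_iff_map.2 hφV
  obtain ⟨c, hc⟩ : ∃ c : Fin 9 → ℝ, ∀ i, φ (Pi.single i 1) = c i := ⟨_, fun _ => rfl⟩
  have hφx : ∀ x : Fin 9 → ℝ, φ x = ∑ i, x i * c i := by
    intro x; rw [phi_sum]; simp only [hc]
  set P : MvPolynomial (Fin 2) ℝ :=
      (C (3*c 0) * X 0^2 - C (3*c 2) * X 0 + C (c 5))^2
    + (C (2*c 0) * X 0 * X 1 + C (c 1) * X 0^2 - C (c 2) * X 1 - C (2*c 3) * X 0 + C (c 6))^2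
    + (C (c 0) * X 1^2 + C (2*c 1) * X 0 * X 1 - C (2*c 3) * X 1 - C (c 4) * X 0 + C (c 7))^2
    + (C (3*c 1) * X 1^2 - C (3*c 4) * X 1 + C (c 8))^2 with hPdef
  have hEval : ∀ a b : ℝ, MvPolynomial.eval ![a, b] P =
      (3*c 0*a^2 - 3*c 2*a + c 5)^2
    + (2*c 0*a*b + c 1*a^2 - c 2*b - 2*c 3*a + c 6)^2
    + (c 0*b^2 + 2*c 1*a*b - 2*c 3*b - c 4*a + c 7)^2
    + (3*c 1*b^2 - 3*c 4*b + c 8)^2 := by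
    intro a b
    rw [hPdef]
    simp
    try ring
  refine ⟨P, ?_, ?_⟩
  · intro hP
    have hf : ∀ a b : ℝ,
        (3*c 0*a^2 - 3*c 2*a + c 5 = 0) ∧
        (2*c 0*a*b + c 1*a^2 - c 2*b - 2*c 3*a + c 6 = 0) ∧
        (c 0*b^2 + 2*c 1*a*b - 2*c 3*b - c 4*a + c 7 = 0) ∧
        (3*c 1*b^2 - 3*c 4*b + c 8 = 0) := by
      intro a b
      have h := congrArg (MvPolynomial.eval ![a, b]) hP
      rw [hEval a b] at h
      simp only [map_zero] at h
      refine ⟨?_, ?_, ?_, ?_⟩ <;>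
      · rw [← pow_eq_zero_iff (n := 2) two_ne_zero]
        linarith [sq_nonneg (3*c 0*a^2 - 3*c 2*a + c 5),
          sq_nonneg (2*c 0*a*b + c 1*a^2 - c 2*b - 2*c 3*a + c 6),
          sq_nonneg (c 0*b^2 + 2*c 1*a*b - 2*c 3*b - c 4*a + c 7),
          sq_nonneg (3*c 1*b^2 - 3*c 4*b + c 8)]
    obtain ⟨e1,e2,e3,e4⟩ := hf 0 0
    obtain ⟨g1,g2,g3,g4⟩ := hf 1 0
    obtain ⟨m1,m2,m3,m4⟩ := hf (-1) 0
    obtain ⟨i1,i2,i3,i4⟩ := hf 0 1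
    obtain ⟨j1,j2,j3,j4⟩ := hf 0 (-1)
    have hc5 : c 5 = 0 := by linarith
    have hc0 : c 0 = 0 := by linarith
    have hc2 : c 2 = 0 := by linarith
    have hc8 : c 8 = 0 := by linarith
    have hc1 : c 1 = 0 := by linarith
    have hc4 : c 4 = 0 := by linarith
    have hc6 : c 6 = 0 := by linarith
    have hc3 : c 3 = 0 := by linarith
    have hc7 : c 7 = 0 := by linarith
    apply hφ0
    refine LinearMap.ext fun x => ?_
    rw [hφx x, sum9]
    simp [hc0, hc1, hc2, hc3, hc4, hc5, hc6, hc7, hc8]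
  · intro a b hab
    suffices h5 : Module.finrank ℝ (Submodule.map (Lmap a b) V) = 5 from ⟨h5.ge, h5⟩
    have hor : (3*c 0*a^2 - 3*c 2*a + c 5 ≠ 0) ∨
        (2*c 0*a*b + c 1*a^2 - c 2*b - 2*c 3*a + c 6 ≠ 0) ∨
        (c 0*b^2 + 2*c 1*a*b - 2*c 3*b - c 4*a + c 7 ≠ 0) ∨
        (3*c 1*b^2 - 3*c 4*b + c 8 ≠ 0) := by
      by_contra h
      push_neg at h
      obtain ⟨h1, h2, h3, h4⟩ := h
      exact hab (by rw [hEval a b, h1, h2, h3, h4]; ring)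
    have hnm : ∀ k : Fin 9 → ℝ, k ∈ LinearMap.ker (Lmap a b) → φ k ≠ 0 →
        Module.finrank ℝ (Submodule.map (Lmap a b) V) = 5 := by
      intro k hk hφk
      exact aux_dim V hV a b k hk fun hm => hφk (LinearMap.mem_ker.1 (hVker hm))
    rcases hor with h1 | h2 | h3 | h4
    · refine hnm _ (k1_mem a b) ?_
      rw [hφx, sum9]
      simp [vec9_5, vec9_6, vec9_7, vec9_8]
      intro h; exact h1 (by linarith [h])
    · refine hnm _ (k2_mem a b) ?_
      rw [hφx, sum9]
      simp [vec9_5, vec9_6, vec9_7, vec9_8]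
      intro h; exact h2 (by linarith [h])
    · refine hnm _ (k3_mem a b) ?_
      rw [hφx, sum9]
      simp [vec9_5, vec9_6, vec9_7, vec9_8]
      intro h; exact h3 (by linarith [h])
    · refine hnm _ (k4_mem a b) ?_
      rw [hφx, sum9]
      simp [vec9_5, vec9_6, vec9_7, vec9_8]
      intro h; exact h4 (by linarith [h])
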